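/- Let g(·;θ₁,θ₂,ρ) be the bivariate exponential model pmf on {0,1}². For every B > 0 there exist δ, C₇ > 0 such that for all θ₁,θ₂,ϑ₁,ϑ₂ ∈ [-2B,2B] and ρ,ϱ ∈ [-B,B] with |θ₁-ϑ₁| + |θ₂-ϑ₂| + |ρ-ϱ| ≤ δ: E_{Y∼g(·;θ₁,θ₂,ρ)}[log g(Y;θ₁,θ₂,ρ)] - E_{Y∼g(·;θ₁,θ₂,ρ)}[log g(Y;ϑ₁,ϑ₂,ϱ)] ≥ C₇·((θ₁-ϑ₁)² + (θ₂-ϑ₂)² + (ρ-ϱ)²). -/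

import Mathlib

/-!
For positive `p, q ≤ 1` one has `p log (p / q) ≥ p - q + (√p - √q)² ≥ p - q + (p - q)² / 4`,
so the Kullback–Leibler divergence of two pmfs dominates `¼ ∑ₐ (pₐ - qₐ)²`. On the parameter
box every probability is at least `ε = e^{-10B} / 4`, where `log` is `1/ε`-Lipschitz, and the
parameters are contrasts of the log-probabilities: `θ₁ = log g(1,0) - log g(0,0)`,
`θ₂ = log g(0,1) - log g(0,0)`, `ρ = log g(1,1) - log g(1,0) - log g(0,1) + log g(0,0)`.
Hence the squared parameter distance is at most `32 / ε²` times the divergence on the whole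
box, so any `δ` works.
-/

/-- The pmf of the bivariate exponential network model with interaction effect. -/
noncomputable def expPMF (a₁ a₂ θ₁ θ₂ ρ : ℝ) : ℝ :=
  Real.exp (θ₁ * a₁ + θ₂ * a₂ + ρ * a₁ * a₂) /
    (1 + Real.exp θ₁ + Real.exp θ₂ + Real.exp (θ₁ + θ₂ + ρ))

open Real Finset

namespace Real

lemma sub_add_sq_sqrt_sub_le_mul_log_sub_log {p q : ℝ} (hp : 0 < p) (hq : 0 < q) :
    p - q + (√p - √q) ^ 2 ≤ p * (log p - log q) := by
  have hsp : 0 < √p := sqrt_pos.2 hp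
  have hsq : 0 < √q := sqrt_pos.2 hq
  -- `log t ≤ t - 1` at `t = √q / √p`
  have hlog : log q / 2 - log p / 2 ≤ √q / √p - 1 := by
    rw [← log_sqrt hp.le, ← log_sqrt hq.le, ← log_div hsq.ne' hsp.ne']
    exact log_le_sub_one_of_pos (by positivity)
  have hmul := mul_le_mul_of_nonneg_left hlog (by positivity : (0 : ℝ) ≤ 2 * p)
  have hpq : 2 * p * (√q / √p - 1) = 2 * √p * √q - 2 * p := by
    field_simp
    linear_combination (-√q) * sq_sqrt hp.le
  nlinarith [sq_sqrt hp.le, sq_sqrt hq.le]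

lemma sq_sub_le_four_mul_sq_sqrt_sub {p q : ℝ} (hp : 0 ≤ p) (hq : 0 ≤ q) (hp1 : p ≤ 1)
    (hq1 : q ≤ 1) : (p - q) ^ 2 ≤ 4 * (√p - √q) ^ 2 := by
  have hsp1 : √p ≤ 1 := sqrt_le_one.2 hp1
  have hsq1 : √q ≤ 1 := sqrt_le_one.2 hq1
  have hfactor : p - q = (√p - √q) * (√p + √q) := by
    linear_combination sq_sqrt hq - sq_sqrt hp
  have hsum : (√p + √q) ^ 2 ≤ 2 ^ 2 :=
    pow_le_pow_left₀ (by positivity) (by linarith) 2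
  rw [hfactor, mul_pow]
  nlinarith [mul_le_mul_of_nonneg_left hsum (sq_nonneg (√p - √q))]

lemma abs_log_sub_log_le {ε x y : ℝ} (hε : 0 < ε) (hx : ε ≤ x) (hy : ε ≤ y) :
    |log x - log y| ≤ |x - y| / ε := by
  wlog hyx : y ≤ x generalizing x y
  · rw [abs_sub_comm, abs_sub_comm x]
    exact this hy hx (le_of_not_ge hyx)
  have hy0 : 0 < y := hε.trans_le hy
  rw [abs_of_nonneg (sub_nonneg.2 (log_le_log hy0 hyx)), abs_of_nonneg (sub_nonneg.2 hyx),
    ← log_div (hy0.trans_le hyx).ne' hy0.ne']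
  calc log (x / y) ≤ x / y - 1 := log_le_sub_one_of_pos (div_pos (hy0.trans_le hyx) hy0)
    _ = (x - y) / y := by field_simp
    _ ≤ (x - y) / ε := div_le_div_of_nonneg_left (sub_nonneg.2 hyx) hε hy

end Real

lemma sum_sq_sub_le_four_mul_sum_mul_log_sub {α : Type*} [Fintype α] {p q : α → ℝ}
    (hp : ∀ a, 0 < p a) (hq : ∀ a, 0 < q a) (hp1 : ∑ a, p a = 1) (hq1 : ∑ a, q a = 1) :
    ∑ a, (p a - q a) ^ 2 ≤
      4 * ((∑ a, p a * log (p a)) - ∑ a, p a * log (q a)) := by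
  have hle_one : ∀ {r : α → ℝ}, (∀ a, 0 < r a) → ∑ a, r a = 1 → ∀ a, r a ≤ 1 :=
    fun hr hr1 a => hr1 ▸ single_le_sum (fun b _ => (hr b).le) (mem_univ a)
  have hpointwise : ∀ a, (p a - q a) ^ 2 ≤ 4 * (p a * (log (p a) - log (q a)) - (p a - q a)) :=
    fun a => (sq_sub_le_four_mul_sq_sqrt_sub (hp a).le (hq a).le (hle_one hp hp1 a)
      (hle_one hq hq1 a)).trans
      (by linarith [sub_add_sq_sqrt_sub_le_mul_log_sub_log (hp a) (hq a)])
  calc ∑ a, (p a - q a) ^ 2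
      ≤ ∑ a, 4 * (p a * (log (p a) - log (q a)) - (p a - q a)) :=
        sum_le_sum fun a _ => hpointwise a
    _ = 4 * ((∑ a, p a * log (p a)) - ∑ a, p a * log (q a)) := by
      simp only [← mul_sum, sum_sub_distrib, mul_sub, hp1, hq1]
      ring

lemma sum_sq_log_sub_log_le_four_div_sq_mul {α : Type*} [Fintype α] {ε : ℝ} {p q : α → ℝ}
    (hε : 0 < ε) (hp : ∀ a, ε ≤ p a) (hq : ∀ a, ε ≤ q a) (hp1 : ∑ a, p a = 1)
    (hq1 : ∑ a, q a = 1) :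
    ∑ a, (log (p a) - log (q a)) ^ 2 ≤
      4 / ε ^ 2 * ((∑ a, p a * log (p a)) - ∑ a, p a * log (q a)) := by
  have hlog : ∀ a, (log (p a) - log (q a)) ^ 2 ≤ (p a - q a) ^ 2 / ε ^ 2 := fun a => by
    rw [← div_pow, sq_le_sq, abs_div, abs_of_pos hε]
    exact abs_log_sub_log_le hε (hp a) (hq a)
  have hKL := sum_sq_sub_le_four_mul_sum_mul_log_sub (fun a => hε.trans_le (hp a))
    (fun a => hε.trans_le (hq a)) hp1 hq1
  calc ∑ a, (log (p a) - log (q a)) ^ 2 ≤ ∑ a, (p a - q a) ^ 2 / ε ^ 2 :=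
        sum_le_sum fun a _ => hlog a
    _ = (∑ a, (p a - q a) ^ 2) / ε ^ 2 := (sum_div _ _ _).symm
    _ ≤ _ := by
      rw [div_mul_eq_mul_div, div_le_div_iff_of_pos_right (by positivity)]
      exact hKL

lemma expPMF_pos (a₁ a₂ θ₁ θ₂ ρ : ℝ) : 0 < expPMF a₁ a₂ θ₁ θ₂ ρ := by
  unfold expPMF; positivity

lemma log_expPMF (a₁ a₂ θ₁ θ₂ ρ : ℝ) :
    log (expPMF a₁ a₂ θ₁ θ₂ ρ) = θ₁ * a₁ + θ₂ * a₂ + ρ * a₁ * a₂ -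
      log (1 + exp θ₁ + exp θ₂ + exp (θ₁ + θ₂ + ρ)) := by
  rw [expPMF, log_div (exp_ne_zero _) (by positivity), log_exp]

lemma sum_expPMF (θ₁ θ₂ ρ : ℝ) :
    ∑ a : Fin 2 × Fin 2, expPMF (a.1 : ℝ) (a.2 : ℝ) θ₁ θ₂ ρ = 1 := by
  simp only [Fintype.sum_prod_type, Fin.sum_univ_two, Fin.val_zero, Fin.val_one,
    Nat.cast_zero, Nat.cast_one, expPMF, ← add_div]
  rw [div_eq_one_iff_eq (by positivity)]
  simp only [mul_zero, mul_one, add_zero, zero_add, exp_zero]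
  ring

lemma exp_neg_two_mul_div_four_le_expPMF {a₁ a₂ : ℝ} (ha₁ : a₁ ∈ Set.Icc 0 1)
    (ha₂ : a₂ ∈ Set.Icc 0 1) (θ₁ θ₂ ρ : ℝ) :
    exp (-2 * (|θ₁| + |θ₂| + |ρ|)) / 4 ≤ expPMF a₁ a₂ θ₁ θ₂ ρ := by
  set M := |θ₁| + |θ₂| + |ρ|
  have hterm : ∀ {t b : ℝ}, b ∈ Set.Icc (0 : ℝ) 1 → -|t| ≤ t * b := fun {t b} hb =>
    calc -|t| ≤ -|t * b| := by
          rw [abs_mul]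
          exact neg_le_neg (mul_le_of_le_one_right (abs_nonneg t)
            (abs_le.2 ⟨by linarith [hb.1], hb.2⟩))
      _ ≤ t * b := neg_abs_le _
  have hprod : a₁ * a₂ ∈ Set.Icc (0 : ℝ) 1 :=
    ⟨mul_nonneg ha₁.1 ha₂.1, mul_le_one₀ ha₁.2 ha₂.1 ha₂.2⟩
  have hnum : exp (-M) ≤ exp (θ₁ * a₁ + θ₂ * a₂ + ρ * a₁ * a₂) := by
    rw [exp_le_exp, mul_assoc ρ]
    linarith [hterm (t := θ₁) ha₁, hterm (t := θ₂) ha₂, hterm (t := ρ) hprod]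
  have hexp : ∀ {t : ℝ}, t ≤ M → exp t ≤ exp M := exp_le_exp.2
  have hZ : 1 + exp θ₁ + exp θ₂ + exp (θ₁ + θ₂ + ρ) ≤ 4 * exp M := by
    linarith [one_le_exp (by positivity : 0 ≤ M),
      hexp (t := θ₁) (by linarith [le_abs_self θ₁, abs_nonneg θ₂, abs_nonneg ρ]),
      hexp (t := θ₂) (by linarith [le_abs_self θ₂, abs_nonneg θ₁, abs_nonneg ρ]),
      hexp (t := θ₁ + θ₂ + ρ) (by linarith [le_abs_self θ₁, le_abs_self θ₂, le_abs_self ρ])]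
  calc exp (-2 * M) / 4 = exp (-M) / (4 * exp M) := by
        rw [div_mul_eq_div_div_swap, ← exp_sub]
        ring_nf
    _ ≤ expPMF a₁ a₂ θ₁ θ₂ ρ := div_le_div₀ (exp_pos _).le hnum (by positivity) hZ

lemma exp_neg_ten_mul_div_four_le_expPMF {B θ₁ θ₂ ρ : ℝ}
    (hθ₁ : θ₁ ∈ Set.Icc (-2 * B) (2 * B)) (hθ₂ : θ₂ ∈ Set.Icc (-2 * B) (2 * B))
    (hρ : ρ ∈ Set.Icc (-B) B) (a : Fin 2 × Fin 2) :
    exp (-(10 * B)) / 4 ≤ expPMF (a.1 : ℝ) (a.2 : ℝ) θ₁ θ₂ ρ := by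
  have hM : |θ₁| + |θ₂| + |ρ| ≤ 5 * B := by
    linarith [abs_le.2 ⟨by linarith [hθ₁.1], hθ₁.2⟩, abs_le.2 ⟨by linarith [hθ₂.1], hθ₂.2⟩,
      abs_le.2 hρ]
  have hfin : ∀ i : Fin 2, (i : ℝ) ∈ Set.Icc 0 1 :=
    fun i => ⟨Nat.cast_nonneg _, Nat.cast_le_one.2 (Fin.is_le _)⟩
  refine le_trans ?_ (exp_neg_two_mul_div_four_le_expPMF (hfin a.1) (hfin a.2) θ₁ θ₂ ρ)
  exact div_le_div_of_nonneg_right (exp_le_exp.2 (by linarith)) zero_le_four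

lemma sq_param_sub_le_eight_mul_sum_sq_log_sub (θ₁ θ₂ ρ ϑ₁ ϑ₂ ϱ : ℝ) :
    (θ₁ - ϑ₁) ^ 2 + (θ₂ - ϑ₂) ^ 2 + (ρ - ϱ) ^ 2 ≤ 8 * ∑ a : Fin 2 × Fin 2,
      (log (expPMF (a.1 : ℝ) (a.2 : ℝ) θ₁ θ₂ ρ) -
        log (expPMF (a.1 : ℝ) (a.2 : ℝ) ϑ₁ ϑ₂ ϱ)) ^ 2 := by
  set c := log (1 + exp ϑ₁ + exp ϑ₂ + exp (ϑ₁ + ϑ₂ + ϱ)) -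
    log (1 + exp θ₁ + exp θ₂ + exp (θ₁ + θ₂ + ρ))
  have hΔ : ∀ a₁ a₂ : ℝ, log (expPMF a₁ a₂ θ₁ θ₂ ρ) - log (expPMF a₁ a₂ ϑ₁ ϑ₂ ϱ) =
      (θ₁ - ϑ₁) * a₁ + (θ₂ - ϑ₂) * a₂ + (ρ - ϱ) * a₁ * a₂ + c := by
    intro a₁ a₂; rw [log_expPMF, log_expPMF]; ring
  simp only [Fintype.sum_prod_type, Fin.sum_univ_two, Fin.val_zero, Fin.val_one,
    Nat.cast_zero, Nat.cast_one, hΔ, mul_zero, mul_one, add_zero, zero_add]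
  set x := θ₁ - ϑ₁
  set y := θ₂ - ϑ₂
  set z := ρ - ϱ
  -- `x, y, z` are contrasts of the log-ratios `d₀₀ = c`, `d₀₁ = y + c`, `d₁₀ = x + c`,
  -- `d₁₁ = x + y + z + c`; the hints are the squares in `8 ∑ d² - x² - y² - z²`
  nlinarith [sq_nonneg (2 * c + x), sq_nonneg (2 * c + y), sq_nonneg (x + y + z),
    sq_nonneg (x - y), sq_nonneg (2 * x + y + z + 2 * c), sq_nonneg (x + 2 * y + z + 2 * c),
    sq_nonneg (x + c), sq_nonneg (y + c), sq_nonneg (x + y + z + c)]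

theorem stmt_8_general (B : ℝ) :
    ∃ δ C₇ : ℝ, 0 < δ ∧ 0 < C₇ ∧
      ∀ θ₁ θ₂ ϑ₁ ϑ₂ ρ ϱ : ℝ,
        θ₁ ∈ Set.Icc (-2 * B) (2 * B) → θ₂ ∈ Set.Icc (-2 * B) (2 * B) →
        ϑ₁ ∈ Set.Icc (-2 * B) (2 * B) → ϑ₂ ∈ Set.Icc (-2 * B) (2 * B) →
        ρ ∈ Set.Icc (-B) B → ϱ ∈ Set.Icc (-B) B →
        |θ₁ - ϑ₁| + |θ₂ - ϑ₂| + |ρ - ϱ| ≤ δ →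
        C₇ * ((θ₁ - ϑ₁) ^ 2 + (θ₂ - ϑ₂) ^ 2 + (ρ - ϱ) ^ 2) ≤
          (∑ a : Fin 2 × Fin 2,
              expPMF (a.1 : ℝ) (a.2 : ℝ) θ₁ θ₂ ρ *
                Real.log (expPMF (a.1 : ℝ) (a.2 : ℝ) θ₁ θ₂ ρ)) -
            (∑ a : Fin 2 × Fin 2,
              expPMF (a.1 : ℝ) (a.2 : ℝ) θ₁ θ₂ ρ *
                Real.log (expPMF (a.1 : ℝ) (a.2 : ℝ) ϑ₁ ϑ₂ ϱ)) := by
  set ε := exp (-(10 * B)) / 4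
  have hε : 0 < ε := by positivity
  refine ⟨1, ε ^ 2 / 32, one_pos, by positivity, ?_⟩
  intro θ₁ θ₂ ϑ₁ ϑ₂ ρ ϱ hθ₁ hθ₂ hϑ₁ hϑ₂ hρ hϱ _
  have hKL := sum_sq_log_sub_log_le_four_div_sq_mul hε
    (exp_neg_ten_mul_div_four_le_expPMF hθ₁ hθ₂ hρ)
    (exp_neg_ten_mul_div_four_le_expPMF hϑ₁ hϑ₂ hϱ) (sum_expPMF θ₁ θ₂ ρ) (sum_expPMF ϑ₁ ϑ₂ ϱ)
  calc _ ≤ ε ^ 2 / 32 * (8 * (4 / ε ^ 2 * _)) := by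
        gcongr
        exact (sq_param_sub_le_eight_mul_sum_sq_log_sub θ₁ θ₂ ρ ϑ₁ ϑ₂ ϱ).trans
          (mul_le_mul_of_nonneg_left hKL (by norm_num))
    _ = _ := by field_simp; ring

/-- Local quadratic lower bound on the KL divergence, uniform over the compact
parameter region. -/
theorem stmt_8 (B : ℝ) (hB : 0 < B) :
    ∃ δ C₇ : ℝ, 0 < δ ∧ 0 < C₇ ∧
      ∀ θ₁ θ₂ ϑ₁ ϑ₂ ρ ϱ : ℝ,
        θ₁ ∈ Set.Icc (-2 * B) (2 * B) → θ₂ ∈ Set.Icc (-2 * B) (2 * B) →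
        ϑ₁ ∈ Set.Icc (-2 * B) (2 * B) → ϑ₂ ∈ Set.Icc (-2 * B) (2 * B) →
        ρ ∈ Set.Icc (-B) B → ϱ ∈ Set.Icc (-B) B →
        |θ₁ - ϑ₁| + |θ₂ - ϑ₂| + |ρ - ϱ| ≤ δ →
        C₇ * ((θ₁ - ϑ₁) ^ 2 + (θ₂ - ϑ₂) ^ 2 + (ρ - ϱ) ^ 2) ≤
          (∑ a : Fin 2 × Fin 2,
              expPMF (a.1 : ℝ) (a.2 : ℝ) θ₁ θ₂ ρ *
                Real.log (expPMF (a.1 : ℝ) (a.2 : ℝ) θ₁ θ₂ ρ)) -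
            (∑ a : Fin 2 × Fin 2,
              expPMF (a.1 : ℝ) (a.2 : ℝ) θ₁ θ₂ ρ *
                Real.log (expPMF (a.1 : ℝ) (a.2 : ℝ) ϑ₁ ϑ₂ ϱ)) :=
  stmt_8_general B
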